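/- Let T be a totally ordered set, k a field, and let I be an ideal of T and a < b elements of T. Then the space of natural transformations (morphisms of functors T → Vect_k) from the interval representation k_{[a,b)} to the interval representation k_I is nonzero if and only if a ∈ I and I ⊆ {x : x < b}; in that case it is one-dimensional. -/

import Mathlib

open scoped Classical DirectSum

universe u v

/-- A persistence module (representation) of a preordered set `T`
over a field `k`: a functor from `T` to `k`-vector spaces. -/
structure PersMod (T : Type u) [Preorder T] (k : Type v) [Field k] where
  V : T → Type v
  [addCommGroup : ∀ t, AddCommGroup (V t)]
  [module : ∀ t, Module k (V t)]
  map : ∀ {s t : T}, s ≤ t → (V s →ₗ[k] V t)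
  map_id : ∀ t : T, map (le_refl t) = LinearMap.id
  map_comp : ∀ {s t u : T} (h₁ : s ≤ t) (h₂ : t ≤ u),
    map (h₁.trans h₂) = (map h₂).comp (map h₁)

attribute [instance] PersMod.addCommGroup PersMod.module

/-- A subset of a preordered set is convex (an interval, in a total order). -/
def IsConvex {T : Type u} [Preorder T] (J : Set T) : Prop :=
  ∀ ⦃a b c : T⦄, a ≤ b → b ≤ c → a ∈ J → c ∈ J → b ∈ J

/-- The interval representation `k_J`: `k` at points of `J`, `0` elsewhere,
identity structure maps within `J`. -/
noncomputable def intervalRep (T : Type u) [Preorder T] (k : Type v) [Field k]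
    (J : Set T) (hJ : IsConvex J) : PersMod T k where
  V t := ↥(if t ∈ J then (⊤ : Submodule k k) else ⊥)
  map {s t} h :=
    { toFun := fun x => ⟨if t ∈ J then (x : k) else 0, by
        by_cases ht : t ∈ J <;> first | (simp only [if_pos ht]; exact Submodule.mem_top) | (simp only [if_neg ht]; exact Submodule.zero_mem _)⟩
      map_add' := fun x y => by
        by_cases ht : t ∈ J <;> ext <;> simp [ht]
      map_smul' := fun c x => by
        by_cases ht : t ∈ J <;> ext <;> simp [ht] }
  map_id t := by
    ext x
    by_cases ht : t ∈ J
    · simp [ht]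
    · have hx : (x : k) = 0 := by
        have h2 := x.2; simp only [if_neg ht] at h2; exact (Submodule.mem_bot k).mp h2
      have e : (if t ∈ J then (x : k) else 0) = (x : k) := by simp only [if_neg ht, hx]
      first | exact e | exact Subtype.ext e
  map_comp {s t u} h₁ h₂ := by
    ext x
    by_cases hu : u ∈ J
    · by_cases ht : t ∈ J
      · have e : (if u ∈ J then (x : k) else 0) =
            (if u ∈ J then (if t ∈ J then (x : k) else 0) else 0) := by simp only [if_pos hu, if_pos ht]
        first | exact e | exact Subtype.ext e
      · by_cases hs : s ∈ J
        · exact absurd (hJ h₁ h₂ hs hu) ht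
        · have hx : (x : k) = 0 := by
            have h2 := x.2; simp only [if_neg hs] at h2; exact (Submodule.mem_bot k).mp h2
          simp [hu, ht, hx]
    · simp [hu]

/-- The space of morphisms of representations `M → N`, as a submodule of
the module of all families of linear maps. -/
def homSubmodule {T : Type u} [Preorder T] (k : Type v) [Field k]
    (M N : PersMod T k) : Submodule k (∀ t, M.V t →ₗ[k] N.V t) where
  carrier := {f | ∀ (s t : T) (h : s ≤ t) (x : M.V s),
    N.map h (f s x) = f t (M.map h x)}
  add_mem' := by
    intro a b ha hb s t h x
    simp [ha s t h x, hb s t h x]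
  zero_mem' := by intro s t h x; simp
  smul_mem' := by
    intro c a ha s t h x
    simp [ha s t h x]

/-- An isomorphism of persistence modules. -/
structure PersIso {T : Type u} [Preorder T] {k : Type v} [Field k]
    (M N : PersMod T k) where
  e : ∀ t, M.V t ≃ₗ[k] N.V t
  natural : ∀ {s t : T} (h : s ≤ t) (x : M.V s),
    e t (M.map h x) = N.map h (e s x)

/-- The pointwise product of a family of persistence modules. -/
def prodRep {T : Type u} [Preorder T] (k : Type v) [Field k]
    (ι : Type v) (F : ι → PersMod T k) : PersMod T k where
  V t := ∀ i, (F i).V t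
  map {s t} h := LinearMap.pi fun i => ((F i).map h).comp (LinearMap.proj i)
  map_id t := by
    ext x i
    simp [(F i).map_id]
  map_comp h₁ h₂ := by
    ext x i
    simp [(F i).map_comp h₁ h₂]

/-- The direct sum of a family of persistence modules. -/
noncomputable def dSum {T : Type u} [Preorder T] (k : Type v) [Field k]
    (ι : Type v) (F : ι → PersMod T k) : PersMod T k where
  V t := ⨁ i, (F i).V t
  map {s t} h :=
    letI := Classical.decEq ι
    DirectSum.toModule k ι _ fun i =>
      (DirectSum.lof k ι (fun j => (F j).V t) i).comp ((F i).map h)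
  map_id t := by
    letI := Classical.decEq ι
    refine DirectSum.linearMap_ext _ fun i => ?_
    ext x
    simp [DirectSum.toModule_lof, (F i).map_id]
  map_comp {s t u} h₁ h₂ := by
    letI := Classical.decEq ι
    refine DirectSum.linearMap_ext _ fun i => ?_
    ext x
    simp [DirectSum.toModule_lof, (F i).map_comp h₁ h₂]

/-- An ideal of a linearly ordered set: a nonempty downward-closed subset. -/
def IsIdeal {T : Type u} [LinearOrder T] (I : Set T) : Prop :=
  I.Nonempty ∧ ∀ ⦃x y : T⦄, x ≤ y → y ∈ I → x ∈ I

theorem isConvex_Ico {T : Type u} [LinearOrder T] (a b : T) : IsConvex (Set.Ico a b) :=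
  fun _ _ _ h1 h2 ha hc => ⟨le_trans ha.1 h1, lt_of_le_of_lt h2 hc.2⟩

theorem IsIdeal.isConvex {T : Type u} [LinearOrder T] {I : Set T} (hI : IsIdeal I) :
    IsConvex I :=
  fun _ _ _ _ hbc _ hc => hI.2 hbc hc

/-!
Since `[a, b)` has a least point `a` and `k_{[a,b)}` is generated by `1 ∈ k` at `a`, a morphism
out of it is determined by the image of that generator, so the Hom space embeds in the stalk
`(k_I)_a ⊆ k` and has dimension at most one. Naturality along `s ≤ t` with `t ∈ I \ [a, b)` forces
a morphism to vanish at `s`, so a nonzero one needs `a ∈ I` and `I ⊆ (-∞, b)`; conversely, under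
these conditions the identity on the overlap `[a, b) ∩ I` is natural.
-/

namespace intervalRep

variable {T : Type u} [Preorder T] {k : Type v} [Field k] {J : Set T} {hJ : IsConvex J}

theorem eq_zero_of_notMem {t : T} (ht : t ∉ J) (x : (intervalRep T k J hJ).V t) : x = 0 := by
  have hx := x.2
  simp only [if_neg ht, Submodule.mem_bot] at hx
  exact Subtype.ext hx

theorem map_apply_val {s t : T} (h : s ≤ t) (x : (intervalRep T k J hJ).V s) :
    ((intervalRep T k J hJ).map h x).1 = if t ∈ J then x.1 else 0 :=
  rfl

def gen {t : T} (ht : t ∈ J) : (intervalRep T k J hJ).V t :=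
  ⟨1, by simp only [if_pos ht, Submodule.mem_top]⟩

theorem map_smul_gen {s t : T} (hs : s ∈ J) (h : s ≤ t) (ht : t ∈ J)
    (x : (intervalRep T k J hJ).V t) : (intervalRep T k J hJ).map h (x.1 • gen hs) = x := by
  apply Subtype.ext
  rw [map_apply_val, if_pos ht]
  exact mul_one x.1

instance (t : T) : Module.Finite k ((intervalRep T k J hJ).V t) :=
  inferInstanceAs (Module.Finite k ↥(if t ∈ J then (⊤ : Submodule k k) else ⊥))

theorem finrank_le_one (t : T) : Module.finrank k ((intervalRep T k J hJ).V t) ≤ 1 :=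
  (Submodule.finrank_le _).trans (Module.finrank_self k).le

end intervalRep

section Hom

variable {T : Type u} [Preorder T] {k : Type v} [Field k]

def homEval (M N : PersMod T k) (t : T) (x : M.V t) : homSubmodule k M N →ₗ[k] N.V t where
  toFun f := f.1 t x
  map_add' _ _ := rfl
  map_smul' _ _ := rfl

theorem homEval_gen_injective {J : Set T} (hJ : IsConvex J) {a : T} (ha : IsLeast J a)
    (N : PersMod T k) :
    Function.Injective (homEval (intervalRep T k J hJ) N a (intervalRep.gen ha.1)) := by
  rw [← LinearMap.ker_eq_bot, LinearMap.ker_eq_bot']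
  intro f hf
  ext t x : 3
  by_cases ht : t ∈ J
  · have hat := ha.2 ht
    -- naturality transports the value at the least point `a` to every `t ∈ J`
    calc f.1 t x = f.1 t ((intervalRep T k J hJ).map hat (x.1 • intervalRep.gen ha.1)) := by
          rw [intervalRep.map_smul_gen ha.1 hat ht]
      _ = N.map hat (x.1 • homEval _ N a (intervalRep.gen ha.1) f) := by
          rw [← f.2 a t hat, map_smul]; rfl
      _ = 0 := by rw [hf, smul_zero, map_zero]
  · rw [intervalRep.eq_zero_of_notMem ht x, map_zero]; rfl

theorem finrank_homSubmodule_intervalRep_le_one {J I : Set T} (hJ : IsConvex J)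
    (hI : IsConvex I) {a : T} (ha : IsLeast J a) :
    Module.finrank k (homSubmodule k (intervalRep T k J hJ) (intervalRep T k I hI)) ≤ 1 :=
  (LinearMap.finrank_le_finrank_of_injective (homEval_gen_injective hJ ha _)).trans
    (intervalRep.finrank_le_one a)

theorem finrank_homSubmodule_intervalRep_eq_one {J I : Set T} (hJ : IsConvex J)
    (hI : IsConvex I) {a : T} (ha : IsLeast J a)
    (hne : homSubmodule k (intervalRep T k J hJ) (intervalRep T k I hI) ≠ ⊥) :
    Module.finrank k (homSubmodule k (intervalRep T k J hJ) (intervalRep T k I hI)) = 1 := by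
  have := Module.Finite.of_injective _ (homEval_gen_injective hJ ha (intervalRep T k I hI))
  have := Submodule.nontrivial_iff_ne_bot.2 hne
  exact le_antisymm (finrank_homSubmodule_intervalRep_le_one hJ hI ha) Module.finrank_pos

theorem homSubmodule_intervalRep_apply_eq_zero {J I : Set T} {hJ : IsConvex J}
    {hI : IsConvex I} {f : ∀ t, (intervalRep T k J hJ).V t →ₗ[k] (intervalRep T k I hI).V t}
    (hf : f ∈ homSubmodule k (intervalRep T k J hJ) (intervalRep T k I hI)) {s t : T}
    (hst : s ≤ t) (htI : t ∈ I) (htJ : t ∉ J) (x : (intervalRep T k J hJ).V s) : f s x = 0 := by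
  have key := congrArg Subtype.val (hf s t hst x)
  rw [intervalRep.eq_zero_of_notMem htJ ((intervalRep T k J hJ).map hst x), map_zero,
    intervalRep.map_apply_val, if_pos htI] at key
  exact Subtype.ext key

noncomputable def overlapHom (J I : Set T) (hJ : IsConvex J) (hI : IsConvex I) (t : T) :
    (intervalRep T k J hJ).V t →ₗ[k] (intervalRep T k I hI).V t where
  toFun x := if ht : t ∈ I then x.1 • intervalRep.gen ht else 0
  map_add' x y := by
    by_cases ht : t ∈ I
    · simp only [dif_pos ht]
      exact add_smul x.1 y.1 _
    · simp only [dif_neg ht, add_zero]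
  map_smul' c x := by
    by_cases ht : t ∈ I
    · simp only [dif_pos ht]
      exact mul_smul c x.1 _
    · simp only [dif_neg ht, smul_zero]

theorem overlapHom_apply_val {J I : Set T} {hJ : IsConvex J} {hI : IsConvex I} {t : T}
    (x : (intervalRep T k J hJ).V t) :
    (overlapHom J I hJ hI t x).1 = if t ∈ I then x.1 else 0 := by
  by_cases ht : t ∈ I
  · simp only [overlapHom, LinearMap.coe_mk, AddHom.coe_mk, dif_pos ht, if_pos ht]
    exact mul_one x.1
  · simp only [overlapHom, LinearMap.coe_mk, AddHom.coe_mk, dif_neg ht, if_neg ht]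
    rfl

theorem overlapHom_mem_homSubmodule {J I : Set T} (hJ : IsConvex J) (hI : IsConvex I)
    (hup : ∀ ⦃s t⦄, s ≤ t → s ∈ J → s ∈ I → t ∈ I → t ∈ J)
    (hdown : ∀ ⦃s t⦄, s ≤ t → s ∈ J → t ∈ J → t ∈ I → s ∈ I) :
    overlapHom J I hJ hI ∈ homSubmodule k (intervalRep T k J hJ) (intervalRep T k I hI) := by
  intro s t hst x
  apply Subtype.ext
  simp only [intervalRep.map_apply_val, overlapHom_apply_val]
  by_cases htI : t ∈ I
  swap
  · simp only [if_neg htI]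
  by_cases hsJ : s ∈ J
  swap
  · have hx : x.1 = 0 := congrArg Subtype.val (intervalRep.eq_zero_of_notMem hsJ x)
    simp only [hx, ite_self]
  have hsI_iff : s ∈ I ↔ t ∈ J :=
    ⟨fun hsI => hup hst hsJ hsI htI, fun htJ => hdown hst hsJ htJ htI⟩
  simp only [if_pos htI, hsI_iff]

theorem overlapHom_ne_zero {J I : Set T} (hJ : IsConvex J) (hI : IsConvex I) {t : T}
    (htJ : t ∈ J) (htI : t ∈ I) : overlapHom (k := k) J I hJ hI ≠ 0 := by
  intro h
  have := congrArg (fun f => (f t (intervalRep.gen htJ)).1) h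
  simp only [overlapHom_apply_val, if_pos htI] at this
  exact one_ne_zero this

end Hom

theorem mem_and_lt_of_homSubmodule_ne_bot {T : Type u} [LinearOrder T] {k : Type v} [Field k]
    {I : Set T} (hI : IsIdeal I) {a b : T}
    (hne : homSubmodule k (intervalRep T k (Set.Ico a b) (isConvex_Ico a b))
      (intervalRep T k I hI.isConvex) ≠ ⊥) :
    a ∈ I ∧ ∀ x ∈ I, x < b := by
  obtain ⟨f, hf, hf0⟩ := Submodule.exists_mem_ne_zero_of_ne_bot hne
  obtain ⟨t, x, hfx⟩ : ∃ t x, f t x ≠ 0 := by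
    by_contra! h
    exact hf0 (funext fun t => LinearMap.ext (h t))
  have htI : t ∈ I := by
    by_contra htI
    exact hfx (intervalRep.eq_zero_of_notMem htI _)
  have htJ : t ∈ Set.Ico a b := by
    by_contra htJ
    exact hfx (by rw [intervalRep.eq_zero_of_notMem htJ x, map_zero])
  refine ⟨hI.2 htJ.1 htI, fun y hyI => ?_⟩
  by_contra! hby
  exact hfx (homSubmodule_intervalRep_apply_eq_zero hf (htJ.2.le.trans hby) hyI
    (fun hyJ => hby.not_gt hyJ.2) x)

/-- Hom from the interval representation of `[a,b)` to the interval representation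
of an ideal `I` is nonzero iff `a ∈ I ⊆ {x | x < b}`, in which case it is
one-dimensional. -/
theorem hom_intervalRep_ideal {T : Type u} [LinearOrder T] (k : Type v) [Field k]
    (I : Set T) (hI : IsIdeal I) (a b : T) (hab : a < b) :
    (homSubmodule k (intervalRep T k (Set.Ico a b) (isConvex_Ico a b))
        (intervalRep T k I hI.isConvex) ≠ ⊥ ↔
      (a ∈ I ∧ ∀ x ∈ I, x < b)) ∧
    ((a ∈ I ∧ ∀ x ∈ I, x < b) →
      Module.finrank k
        ↥(homSubmodule k (intervalRep T k (Set.Ico a b) (isConvex_Ico a b))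
            (intervalRep T k I hI.isConvex)) = 1) := by
  have hleast : IsLeast (Set.Ico a b) a := isLeast_Ico hab
  have hne_bot_iff : homSubmodule k (intervalRep T k (Set.Ico a b) (isConvex_Ico a b))
      (intervalRep T k I hI.isConvex) ≠ ⊥ ↔ (a ∈ I ∧ ∀ x ∈ I, x < b) := by
    refine ⟨mem_and_lt_of_homSubmodule_ne_bot hI, fun ⟨haI, hIb⟩ => ?_⟩
    have hup : ∀ ⦃s t⦄, s ≤ t → s ∈ Set.Ico a b → s ∈ I → t ∈ I → t ∈ Set.Ico a b :=
      fun s t hst hsJ _ htI => ⟨hsJ.1.trans hst, hIb t htI⟩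
    have hdown : ∀ ⦃s t⦄, s ≤ t → s ∈ Set.Ico a b → t ∈ Set.Ico a b → t ∈ I → s ∈ I :=
      fun s t hst _ _ htI => hI.2 hst htI
    exact (Submodule.ne_bot_iff _).2 ⟨_, overlapHom_mem_homSubmodule _ _ hup hdown,
      overlapHom_ne_zero _ _ hleast.1 haI⟩
  exact ⟨hne_bot_iff,
    fun h => finrank_homSubmodule_intervalRep_eq_one _ _ hleast (hne_bot_iff.2 h)⟩
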